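/- arXiv:1702.02596 — 11 statements merged into one kernel-verified Lean document; each statement's English description precedes it below -/
import Mathlib

section
/- Let h : X₁ → X₂ be a continuous surjection between compact metric spaces mapping a continuous map f₁ to a continuous map f₂ (i.e. h ∘ f₁ = f₂ ∘ h). If B₂ is a chain component (basic set) of f₂, then there exists a chain component B₁ of f₁ with h(B₁) ⊆ B₂. -/
/-- The chain relation: `(x,y) ∈ 𝒞f` iff for every `ε > 0` there is a finite
`ε`-chain from `x` to `y`. -/
def ChainRel {X : Type*} [MetricSpace X] (f : X → X) (x y : X) : Prop :=
  ∀ ε : ℝ, 0 < ε → ∃ n : ℕ, 1 ≤ n ∧ ∃ c : ℕ → X, c 0 = x ∧ c n = y ∧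
    ∀ i < n, dist (f (c i)) (c (i + 1)) ≤ ε

/-- `B` is a chain component (basic set) of `f`: an equivalence class of the
relation `𝒞f ∩ 𝒞f⁻¹` on the set of chain recurrent points. -/
def IsBasicSet {X : Type*} [MetricSpace X] (f : X → X) (B : Set X) : Prop :=
  ∃ x, ChainRel f x x ∧ B = {y | ChainRel f x y ∧ ChainRel f y x}

private lemma chainRel_trans {X : Type*} [MetricSpace X] {f : X → X} {a b c : X}
    (h1 : ChainRel f a b) (h2 : ChainRel f b c) : ChainRel f a c := by
  intro ε hε
  obtain ⟨n, hn, c1, hc10, hc1n, hc1⟩ := h1 ε hε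
  obtain ⟨k, hk, c2, hc20, hc2k, hc2⟩ := h2 ε hε
  set C : ℕ → X := fun i => if i ≤ n then c1 i else c2 (i - n) with hC
  have hCle : ∀ i, i ≤ n → C i = c1 i := by intro i hi; simp [hC, hi]
  have hCge : ∀ i, n ≤ i → C i = c2 (i - n) := by
    intro i hi
    rcases eq_or_lt_of_le hi with h | h
    · simp [hC, ← h, hc1n, hc20]
    · have : ¬ (i ≤ n) := by omega
      simp [hC, this]
  refine ⟨n + k, by omega, C, ?_, ?_, ?_⟩
  · rw [hCle 0 (by omega), hc10]
  · rw [hCge (n + k) (by omega)]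
    have : n + k - n = k := by omega
    rw [this, hc2k]
  · intro i hi
    by_cases hin : i < n
    · rw [hCle i (by omega), hCle (i + 1) (by omega)]
      exact hc1 i hin
    · push_neg at hin
      rw [hCge i hin, hCge (i + 1) (by omega)]
      have he : i + 1 - n = (i - n) + 1 := by omega
      rw [he]
      exact hc2 (i - n) (by omega)

private lemma chainRel_map {X₁ X₂ : Type*} [MetricSpace X₁] [MetricSpace X₂] [CompactSpace X₁]
    {f₁ : X₁ → X₁} {f₂ : X₂ → X₂} {h : X₁ → X₂} (hh : Continuous h)
    (hcomm : ∀ x, h (f₁ x) = f₂ (h x)) {x y : X₁}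
    (hxy : ChainRel f₁ x y) : ChainRel f₂ (h x) (h y) := by
  intro ε hε
  obtain ⟨δ, hδ, hmod⟩ := Metric.uniformContinuous_iff.mp
    (CompactSpace.uniformContinuous_of_continuous hh) ε hε
  obtain ⟨n, hn, c, hc0, hcn, hc⟩ := hxy (δ / 2) (by positivity)
  refine ⟨n, hn, fun i => h (c i), by simp [hc0], by simp [hcn], fun i hi => ?_⟩
  show dist (f₂ (h (c i))) (h (c (i + 1))) ≤ ε
  rw [← hcomm]
  exact le_of_lt (hmod (lt_of_le_of_lt (hc i hi) (by linarith)))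

private lemma chainRel_fself {X : Type*} [MetricSpace X] [CompactSpace X] {f : X → X}
    (hf : Continuous f) {z : X} (hz : ChainRel f z z) : ChainRel f (f z) z := by
  intro ε hε
  obtain ⟨δ, hδ, hmod⟩ := Metric.uniformContinuous_iff.mp
    (CompactSpace.uniformContinuous_of_continuous hf) (ε / 2) (by positivity)
  have hδ'pos : (0:ℝ) < min (δ / 2) (ε / 2) := by positivity
  obtain ⟨n, hn, c, hc0, hcn, hc⟩ := hz (min (δ / 2) (ε / 2)) hδ'pos
  have hδ'δ : min (δ / 2) (ε / 2) < δ := lt_of_le_of_lt (min_le_left _ _) (by linarith)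
  have hδ'ε : min (δ / 2) (ε / 2) ≤ ε / 2 := min_le_right _ _
  have hfz : dist (f z) (c 1) < δ := by
    have h0 := hc 0 (by omega)
    rw [hc0] at h0
    exact lt_of_le_of_lt h0 hδ'δ
  have hmod1 : dist (f (f z)) (f (c 1)) < ε / 2 := hmod hfz
  rcases eq_or_lt_of_le hn with h1 | h2
  · -- n = 1
    have hc1 : c 1 = z := by rw [← h1] at hcn; exact hcn
    refine ⟨1, le_refl _, fun i => if i = 0 then f z else z, by simp, by simp, ?_⟩
    intro i hi
    have hi0 : i = 0 := by omega
    subst hi0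
    show dist (f (if (0:ℕ) = 0 then f z else z)) (if (1:ℕ) = 0 then f z else z) ≤ ε
    rw [if_pos rfl, if_neg one_ne_zero]
    have hstep2 : dist (f z) z < δ := by rw [← hc1] at hfz ⊢; exact hfz
    calc dist (f (f z)) z ≤ dist (f (f z)) (f z) + dist (f z) z := dist_triangle _ _ _
      _ ≤ ε / 2 + min (δ / 2) (ε / 2) := by
          rw [hc1] at hmod1
          have h0 := hc 0 (by omega)
          rw [hc0, hc1] at h0
          exact add_le_add (le_of_lt hmod1) h0
      _ ≤ ε := by linarith
  · -- n ≥ 2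
    set C : ℕ → X := fun i => if i = 0 then f z else c (i + 1) with hCdef
    have hC0 : C 0 = f z := by simp [hCdef]
    have hCpos : ∀ i, i ≠ 0 → C i = c (i + 1) := by intro i hi; simp [hCdef, hi]
    refine ⟨n - 1, by omega, C, hC0, ?_, ?_⟩
    · rw [hCpos (n - 1) (by omega)]
      have : n - 1 + 1 = n := by omega
      rw [this, hcn]
    · intro i hi
      by_cases hi0 : i = 0
      · subst hi0
        rw [hC0, hCpos 1 one_ne_zero]
        calc dist (f (f z)) (c (1 + 1)) ≤ dist (f (f z)) (f (c 1)) + dist (f (c 1)) (c (1 + 1)) :=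
              dist_triangle _ _ _
          _ ≤ ε / 2 + min (δ / 2) (ε / 2) := add_le_add (le_of_lt hmod1) (hc 1 (by omega))
          _ ≤ ε := by linarith
      · rw [hCpos i hi0, hCpos (i + 1) (by omega)]
        have : i + 1 + 1 = (i + 1) + 1 := rfl
        exact le_trans (hc (i + 1) (by omega)) (by linarith)

private lemma chainRel_iterate {X : Type*} [MetricSpace X] [CompactSpace X] {f : X → X}
    (hf : Continuous f) {x : X} (hx : ChainRel f x x) :
    ∀ m : ℕ, ChainRel f (f^[m] x) x := by
  intro m
  induction m with
  | zero => simpa using hx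
  | succ m ih =>
    rw [Function.iterate_succ_apply']
    exact chainRel_trans (chainRel_map hf (fun _ => rfl) ih) (chainRel_fself hf hx)

private lemma chainRel_self_of_cluster {X : Type*} [MetricSpace X] [CompactSpace X]
    {f : X → X} (hf : Continuous f) {x z : X}
    (hz : ∀ δ > (0:ℝ), ∃ m₁ m₂ : ℕ, m₁ < m₂ ∧ dist (f^[m₁] x) z < δ ∧ dist (f^[m₂] x) z < δ) :
    ChainRel f z z := by
  intro ε hε
  obtain ⟨δ, hδ, hmod⟩ := Metric.uniformContinuous_iff.mp
    (CompactSpace.uniformContinuous_of_continuous hf) (ε / 2) (by positivity)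
  obtain ⟨m₁, m₂, hm, hd1, hd2⟩ := hz (min δ (ε / 2)) (by positivity)
  have hd1δ : dist (f^[m₁] x) z < δ := lt_of_lt_of_le hd1 (min_le_left _ _)
  have hd2ε : dist (f^[m₂] x) z ≤ ε / 2 := le_trans (le_of_lt hd2) (min_le_right _ _)
  have hmod1 : dist (f z) (f (f^[m₁] x)) < ε / 2 := hmod (by rw [dist_comm]; exact hd1δ)
  set n : ℕ := m₂ - m₁ with hndef
  have hn1 : 1 ≤ n := by omega
  set C : ℕ → X := fun i => if i = 0 ∨ n ≤ i then z else f^[m₁ + i] x with hCdef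
  have hC0 : C 0 = z := by simp [hCdef]
  have hCn : ∀ i, n ≤ i → C i = z := by intro i hi; simp [hCdef, hi]
  have hCmid : ∀ i, i ≠ 0 → i < n → C i = f^[m₁ + i] x := by
    intro i h1 h2
    have : ¬ (i = 0 ∨ n ≤ i) := by omega
    simp [hCdef, this]
  have hiter : ∀ j : ℕ, f (f^[j] x) = f^[j + 1] x :=
    fun j => (Function.iterate_succ_apply' f j x).symm
  refine ⟨n, hn1, C, hC0, hCn n le_rfl, ?_⟩
  intro i hi
  by_cases hi0 : i = 0
  · subst hi0
    rw [hC0]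
    by_cases hn2 : n ≤ 1
    · -- n = 1, so m₂ = m₁ + 1
      rw [hCn 1 hn2]
      have hm2 : m₁ + 1 = m₂ := by omega
      calc dist (f z) z ≤ dist (f z) (f (f^[m₁] x)) + dist (f (f^[m₁] x)) z :=
            dist_triangle _ _ _
        _ ≤ ε / 2 + ε / 2 := by
            have hB : dist (f (f^[m₁] x)) z ≤ ε / 2 := by rw [hiter m₁, hm2]; exact hd2ε
            exact add_le_add (le_of_lt hmod1) hB
        _ = ε := by ring
    · rw [hCmid 1 one_ne_zero (by omega)]
      rw [← hiter m₁]
      linarith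
  · rw [hCmid i hi0 hi]
    by_cases hlast : i + 1 = n
    · rw [hCn (i + 1) (by omega), hiter (m₁ + i)]
      have : m₁ + i + 1 = m₂ := by omega
      rw [this]
      linarith
    · rw [hCmid (i + 1) (by omega) (by omega), hiter (m₁ + i)]
      have : m₁ + (i + 1) = m₁ + i + 1 := by omega
      rw [this]
      simp [le_of_lt hε]

private lemma chainRel_to_of_cluster {X : Type*} [MetricSpace X] {f : X → X} {x w : X}
    (hw : ∀ δ > (0:ℝ), ∃ m : ℕ, 1 ≤ m ∧ dist (f^[m] x) w < δ) :
    ChainRel f x w := by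
  intro ε hε
  obtain ⟨m, hm, hd⟩ := hw ε hε
  set C : ℕ → X := fun i => if i < m then f^[i] x else w with hCdef
  have hClt : ∀ i, i < m → C i = f^[i] x := by intro i hi; simp [hCdef, hi]
  have hCge : ∀ i, ¬ (i < m) → C i = w := by intro i hi; simp [hCdef, hi]
  refine ⟨m, hm, C, ?_, hCge m (by omega), ?_⟩
  · rw [hClt 0 (by omega)]; simp
  · intro i hi
    rw [hClt i hi]
    by_cases h : i + 1 < m
    · rw [hClt (i + 1) h, ← Function.iterate_succ_apply' f i x]
      simp [le_of_lt hε]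
    · rw [hCge (i + 1) h]
      have him : i + 1 = m := by omega
      have : f (f^[i] x) = f^[m] x := by
        rw [← him, Function.iterate_succ_apply']
      rw [this]
      exact le_of_lt hd

private lemma chainRel_from_of_cluster {X : Type*} [MetricSpace X] [CompactSpace X]
    {f : X → X} (hf : Continuous f) {x w : X} (hx : ChainRel f x x)
    (hw : ∀ δ > (0:ℝ), ∃ m : ℕ, dist (f^[m] x) w < δ) :
    ChainRel f w x := by
  intro ε hε
  obtain ⟨δ, hδ, hmod⟩ := Metric.uniformContinuous_iff.mp
    (CompactSpace.uniformContinuous_of_continuous hf) ε hε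
  obtain ⟨m, hd⟩ := hw δ hδ
  obtain ⟨k, hk, e, he0, hek, he⟩ := chainRel_iterate hf hx (m + 1) ε hε
  set C : ℕ → X := fun i => if i = 0 then w else e (i - 1) with hCdef
  have hC0 : C 0 = w := by simp [hCdef]
  have hCpos : ∀ i, i ≠ 0 → C i = e (i - 1) := by intro i hi; simp [hCdef, hi]
  refine ⟨k + 1, by omega, C, hC0, ?_, ?_⟩
  · rw [hCpos (k + 1) (by omega)]
    have : k + 1 - 1 = k := by omega
    rw [this, hek]
  · intro i hi
    by_cases hi0 : i = 0
    · subst hi0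
      rw [hC0, hCpos 1 one_ne_zero]
      have h1 : dist (f w) (f (f^[m] x)) < ε := hmod (by rw [dist_comm]; exact hd)
      have h2 : f (f^[m] x) = e 0 := by
        rw [he0, Function.iterate_succ_apply']
      rw [h2] at h1
      simpa using le_of_lt h1
    · rw [hCpos i hi0, hCpos (i + 1) (by omega)]
      have h3 : i + 1 - 1 = (i - 1) + 1 := by omega
      rw [h3]
      exact he (i - 1) (by omega)

/-- if `h` is a continuous surjection mapping `f₁` to `f₂`, then
every chain component of `f₂` contains the image of some chain component of
`f₁`. -/
theorem stmt_4 {X₁ X₂ : Type*} [MetricSpace X₁] [MetricSpace X₂]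
    [CompactSpace X₁] [CompactSpace X₂]
    (f₁ : X₁ → X₁) (f₂ : X₂ → X₂) (hf₁ : Continuous f₁) (hf₂ : Continuous f₂)
    (h : X₁ → X₂) (hh : Continuous h) (hsurj : Function.Surjective h)
    (hcomm : h ∘ f₁ = f₂ ∘ h)
    (B₂ : Set X₂) (hB₂ : IsBasicSet f₂ B₂) :
    ∃ B₁ : Set X₁, IsBasicSet f₁ B₁ ∧ h '' B₁ ⊆ B₂ := by
  obtain ⟨x₂, hrec, rfl⟩ := hB₂
  obtain ⟨x₁, hx₁⟩ := hsurj x₂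
  have hcomm' : ∀ x, h (f₁ x) = f₂ (h x) := fun x => congrFun hcomm x
  have hsemi : ∀ m : ℕ, ∀ x, h (f₁^[m] x) = f₂^[m] (h x) := by
    intro m
    induction m with
    | zero => simp
    | succ m ih =>
      intro x
      rw [Function.iterate_succ_apply, Function.iterate_succ_apply, ih, hcomm']
  obtain ⟨z, φ, hφ, hconv⟩ := CompactSpace.tendsto_subseq (fun n => f₁^[n] x₁)
  have hcl₁ : ∀ δ > (0:ℝ), ∃ m₁ m₂ : ℕ, m₁ < m₂ ∧
      dist (f₁^[m₁] x₁) z < δ ∧ dist (f₁^[m₂] x₁) z < δ := by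
    intro δ hδ
    obtain ⟨N, hN⟩ := Metric.tendsto_atTop.mp hconv δ hδ
    exact ⟨φ N, φ (N + 1), hφ (by omega), hN N le_rfl, hN (N + 1) (by omega)⟩
  have hzz : ChainRel f₁ z z := chainRel_self_of_cluster hf₁ hcl₁
  have hhconv : Filter.Tendsto (fun n => f₂^[φ n] x₂) Filter.atTop (nhds (h z)) := by
    have h0 := (hh.tendsto z).comp hconv
    have heq : (h ∘ ((fun n => f₁^[n] x₁) ∘ φ)) = fun n => f₂^[φ n] x₂ := by
      funext n
      simp only [Function.comp_apply]
      rw [hsemi, hx₁]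
    rwa [heq] at h0
  have hcl₂ : ∀ δ > (0:ℝ), ∃ m : ℕ, 1 ≤ m ∧ dist (f₂^[m] x₂) (h z) < δ := by
    intro δ hδ
    obtain ⟨N, hN⟩ := Metric.tendsto_atTop.mp hhconv δ hδ
    refine ⟨φ (N + 1), ?_, hN (N + 1) (by omega)⟩
    have h5 := hφ.le_apply (x := N + 1)
    omega
  have h1 : ChainRel f₂ x₂ (h z) := chainRel_to_of_cluster hcl₂
  have h2 : ChainRel f₂ (h z) x₂ :=
    chainRel_from_of_cluster hf₂ hrec
      (fun δ hδ => ⟨(hcl₂ δ hδ).choose, (hcl₂ δ hδ).choose_spec.2⟩)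
  refine ⟨{y | ChainRel f₁ z y ∧ ChainRel f₁ y z}, ⟨z, hzz, rfl⟩, ?_⟩
  rintro w ⟨y, ⟨hzy, hyz⟩, rfl⟩
  exact ⟨chainRel_trans h1 (chainRel_map hh hcomm' hzy),
    chainRel_trans (chainRel_map hh hcomm' hyz) h2⟩
end

section
/- Let h : X₁ → X₂ be a continuous almost one-to-one map (the set of points x with h⁻¹(h(x)) = {x} is dense in X₁) and A₁, A₂ closed subsets of X₁ with A₁ ∩ A₂ nowhere dense. Then h(A₁) ∩ h(A₂) is nowhere dense in X₂. -/
/-- if `h` is continuous and almost one-to-one (the set of points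
`x` with `h⁻¹(h x) = {x}` is dense), and `A₁, A₂` are closed with `A₁ ∩ A₂`
nowhere dense, then `h(A₁) ∩ h(A₂)` is nowhere dense. -/
theorem stmt_6 {X₁ X₂ : Type*} [MetricSpace X₁] [MetricSpace X₂]
    [CompactSpace X₁] [CompactSpace X₂]
    (h : X₁ → X₂) (hh : Continuous h)
    (hinj : Dense {x : X₁ | h ⁻¹' {h x} = {x}})
    (A₁ A₂ : Set X₁) (hA₁ : IsClosed A₁) (hA₂ : IsClosed A₂)
    (hnd : IsNowhereDense (A₁ ∩ A₂)) :
    IsNowhereDense (h '' A₁ ∩ h '' A₂) := by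
  have hclosed : IsClosed (h '' A₁ ∩ h '' A₂) :=
    ((hA₁.isCompact.image hh).isClosed).inter ((hA₂.isCompact.image hh).isClosed)
  have hndint : interior (A₁ ∩ A₂) = ∅ := by
    have := hnd
    unfold IsNowhereDense at this
    rwa [(hA₁.inter hA₂).closure_eq] at this
  unfold IsNowhereDense
  rw [hclosed.closure_eq]
  by_contra hne
  obtain ⟨y, hy⟩ := Set.nonempty_iff_ne_empty.2 hne
  set U : Set X₂ := interior (h '' A₁ ∩ h '' A₂) with hU
  have hUopen : IsOpen U := isOpen_interior
  have hVopen : IsOpen (h ⁻¹' U) := hUopen.preimage hh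
  -- every injectivity point of h⁻¹(U) lies in A₁ ∩ A₂
  have hsub : h ⁻¹' U ∩ {x : X₁ | h ⁻¹' {h x} = {x}} ⊆ A₁ ∩ A₂ := by
    rintro x ⟨hxU, hxinj⟩
    have hhx : h x ∈ h '' A₁ ∩ h '' A₂ := interior_subset hxU
    obtain ⟨⟨a₁, ha₁, heq₁⟩, ⟨a₂, ha₂, heq₂⟩⟩ := hhx
    have h1 : a₁ ∈ h ⁻¹' {h x} := by simp [heq₁]
    have h2 : a₂ ∈ h ⁻¹' {h x} := by simp [heq₂]
    rw [hxinj] at h1 h2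
    simp only [Set.mem_singleton_iff] at h1 h2
    refine ⟨h1 ▸ ha₁, ?_⟩
    rw [← h2]; exact ha₂
  -- h⁻¹(U) ⊆ closure (A₁ ∩ A₂) = A₁ ∩ A₂
  have hVsub : h ⁻¹' U ⊆ A₁ ∩ A₂ := by
    intro x hx
    have hxcl : x ∈ closure (h ⁻¹' U ∩ {x : X₁ | h ⁻¹' {h x} = {x}}) := by
      exact hVopen.inter_closure ⟨hx, hinj x⟩
    have := closure_mono hsub hxcl
    rwa [(hA₁.inter hA₂).closure_eq] at this
  -- h⁻¹(U) is nonempty open ⊆ A₁ ∩ A₂, contradicting empty interior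
  have hymem : y ∈ h '' A₁ ∩ h '' A₂ := interior_subset hy
  obtain ⟨a, _, ha⟩ := hymem.1
  have haV : a ∈ h ⁻¹' U := by
    show h a ∈ U
    rw [ha]; exact hy
  have : a ∈ interior (A₁ ∩ A₂) := interior_maximal hVsub hVopen haV
  rw [hndint] at this
  exact this
end

section
/- Let h : X₁ → X₂ be continuous with μ₀ a full Borel probability measure on X₁ such that μ₀(Inj_h) = 1, where Inj_h = {x : h⁻¹(h(x)) = {x}}. If A₁, A₂ are closed subsets of X₁ with μ₀(A₁ ∩ A₂) = 0, then (h_*μ₀)(h(A₁) ∩ h(A₂)) = 0. -/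
/-!
A point of `Inj_h` whose image lies in `h(A₁) ∩ h(A₂)` lies in `A₁ ∩ A₂`, so the preimage
`P = h⁻¹(h(A₁) ∩ h(A₂))` meets `Inj_h` in a null set. As `Inj_h` has outer measure one and `P`
is measurable (images of compact sets are closed), `P` itself is null.
-/

open MeasureTheory Set

/-- The paper's `Inj_h`. -/
def injSet {α β : Type*} (h : α → β) : Set α := {x | h ⁻¹' {h x} = {x}}

theorem mem_of_image_mem_of_mem_injSet {α β : Type*} {h : α → β} {A : Set α} {x : α}
    (hx : x ∈ injSet h) (hxA : h x ∈ h '' A) : x ∈ A := by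
  obtain ⟨a, ha, hax⟩ := hxA
  have hax' : a = x := by rw [← mem_singleton_iff, ← hx]; exact hax
  exact hax' ▸ ha

theorem injSet_inter_preimage_image_inter_subset {α β : Type*} (h : α → β) (A₁ A₂ : Set α) :
    injSet h ∩ h ⁻¹' (h '' A₁ ∩ h '' A₂) ⊆ A₁ ∩ A₂ :=
  fun _ ⟨hx, hx₁, hx₂⟩ =>
    ⟨mem_of_image_mem_of_mem_injSet hx hx₁, mem_of_image_mem_of_mem_injSet hx hx₂⟩

/-- `s` need not be measurable: `μ s` is an outer measure, and the argument only uses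
subadditivity on `s ⊆ (s ∩ t) ∪ tᶜ`. -/
theorem measure_eq_zero_of_measure_eq_one_of_inter_null {α : Type*} [MeasurableSpace α]
    {μ : Measure α} [IsProbabilityMeasure μ] {s t : Set α} (ht : NullMeasurableSet t μ)
    (hs : μ s = 1) (hst : μ (s ∩ t) = 0) : μ t = 0 := by
  have hcompl : 1 ≤ μ tᶜ :=
    calc 1 = μ s := hs.symm
      _ ≤ μ (s ∩ t) + μ (s \ t) := measure_le_inter_add_sdiff μ s t
      _ ≤ μ tᶜ := by rw [hst, zero_add]; exact measure_mono (sdiff_subset_compl s t)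
  exact (prob_compl_eq_one_iff₀ ht).mp (le_antisymm prob_le_one hcompl)

theorem measurableSet_image_inter_image {X Y : Type*} [TopologicalSpace X] [CompactSpace X]
    [TopologicalSpace Y] [T2Space Y] [MeasurableSpace Y] [OpensMeasurableSpace Y]
    {h : X → Y} (hh : Continuous h) {A₁ A₂ : Set X} (hA₁ : IsClosed A₁) (hA₂ : IsClosed A₂) :
    MeasurableSet (h '' A₁ ∩ h '' A₂) :=
  ((hA₁.isCompact.image hh).isClosed.inter (hA₂.isCompact.image hh).isClosed).measurableSet

theorem stmt_7_general {X₁ X₂ : Type*} [MetricSpace X₁] [MetricSpace X₂]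
    [CompactSpace X₁]
    [MeasurableSpace X₁] [BorelSpace X₁] [MeasurableSpace X₂] [BorelSpace X₂]
    (h : X₁ → X₂) (hh : Continuous h)
    (μ₀ : Measure X₁) [IsProbabilityMeasure μ₀]
    (hinj : μ₀ {x : X₁ | h ⁻¹' {h x} = {x}} = 1)
    (A₁ A₂ : Set X₁) (hA₁ : IsClosed A₁) (hA₂ : IsClosed A₂)
    (hzero : μ₀ (A₁ ∩ A₂) = 0) :
    μ₀.map h (h '' A₁ ∩ h '' A₂) = 0 := by
  have hmeas := measurableSet_image_inter_image hh hA₁ hA₂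
  rw [Measure.map_apply hh.measurable hmeas]
  refine measure_eq_zero_of_measure_eq_one_of_inter_null
    (hh.measurable hmeas).nullMeasurableSet hinj ?_
  exact measure_mono_null (injSet_inter_preimage_image_inter_subset h A₁ A₂) hzero

/-- if `μ₀` is a full Borel probability measure on `X₁`, `h` is
continuous with `μ₀(Inj_h) = 1`, and `A₁, A₂` are closed with
`μ₀(A₁ ∩ A₂) = 0`, then `(h_*μ₀)(h(A₁) ∩ h(A₂)) = 0`. -/
theorem stmt_7 {X₁ X₂ : Type*} [MetricSpace X₁] [MetricSpace X₂]
    [CompactSpace X₁] [CompactSpace X₂]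
    [MeasurableSpace X₁] [BorelSpace X₁] [MeasurableSpace X₂] [BorelSpace X₂]
    (h : X₁ → X₂) (hh : Continuous h)
    (μ₀ : Measure X₁) [IsProbabilityMeasure μ₀]
    (hfull : ∀ U : Set X₁, IsOpen U → U.Nonempty → 0 < μ₀ U)
    (hinj : μ₀ {x : X₁ | h ⁻¹' {h x} = {x}} = 1)
    (A₁ A₂ : Set X₁) (hA₁ : IsClosed A₁) (hA₂ : IsClosed A₂)
    (hzero : μ₀ (A₁ ∩ A₂) = 0) :
    μ₀.map h (h '' A₁ ∩ h '' A₂) = 0 :=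
  stmt_7_general h hh μ₀ hinj A₁ A₂ hA₁ hA₂ hzero
end

section
/- Let h : X₁ → X₂ be a continuous surjection mapping f₁ to f₂. If f₁ has only finitely many chain components, then f₂ has at most as many chain components as f₁. -/
/-!
If `y = h x` is chain recurrent for `f₂`, let `z` be an ω-limit point of the `f₁`-orbit of `x`.
Because the chain relation is closed, `z` is chain recurrent for `f₁`, and `h z`, an ω-limit point
of the `f₂`-orbit of `y`, is chain equivalent to `y`. Semiconjugacies map chain classes into chain
classes, so `B ↦ ⋃ x ∈ B, [h x]` sends the chain class of `z` to that of `y`: every chain component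
of `f₂` is the image of one of `f₁`.
-/

open Filter Topology Relation Function

theorem Relation.transGen_iff_exists_seq {α : Type*} {r : α → α → Prop} {x y : α} :
    TransGen r x y ↔
      ∃ n : ℕ, 1 ≤ n ∧ ∃ c : ℕ → α, c 0 = x ∧ c n = y ∧ ∀ i < n, r (c i) (c (i + 1)) := by
  constructor
  · intro hxy
    induction hxy with
    | @single y hxy =>
      refine ⟨1, le_rfl, fun i => if i = 0 then x else y, by simp, by simp, fun i hi => ?_⟩
      obtain rfl : i = 0 := by omega
      simpa using hxy
    | @tail b z _ hbz ih =>
      obtain ⟨n, hn, c, hc0, hcn, hc⟩ := ih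
      refine ⟨n + 1, by omega, fun i => if i ≤ n then c i else z, by simp [hc0], by simp,
        fun i hi => ?_⟩
      rcases Nat.lt_succ_iff_lt_or_eq.1 hi with hi | rfl
      · simpa [hi.le, Nat.succ_le_of_lt hi] using hc i hi
      · simpa [hcn] using hbz
  · rintro ⟨n, hn, c, rfl, rfl, hc⟩
    induction n, hn using Nat.le_induction with
    | base => exact .single (hc 0 one_pos)
    | succ n _ ih => exact .tail (ih fun i hi => hc i (by omega)) (hc n (by omega))

section ChainRel

variable {X : Type*} [MetricSpace X] {f : X → X} {x y z : X}

def ChainStep (f : X → X) (ε : ℝ) (x y : X) : Prop := dist (f x) y ≤ ε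

theorem chainStep_mono {ε ε' : ℝ} (h : ε ≤ ε') : ChainStep f ε ≤ ChainStep f ε' :=
  fun _ _ hxy => hxy.trans h

theorem chainRel_iff_transGen : ChainRel f x y ↔ ∀ ε > 0, TransGen (ChainStep f ε) x y := by
  simp only [ChainRel, transGen_iff_exists_seq, ChainStep, gt_iff_lt]

theorem ChainRel.trans (hxy : ChainRel f x y) (hyz : ChainRel f y z) : ChainRel f x z := by
  rw [chainRel_iff_transGen] at *
  exact fun ε hε => (hxy ε hε).trans (hyz ε hε)

theorem chainRel_iterate_s8 (f : X → X) (x : X) {n : ℕ} (hn : 1 ≤ n) : ChainRel f x (f^[n] x) := by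
  rw [chainRel_iff_transGen]
  intro ε hε
  have hstep : ∀ k, ChainStep f ε (f^[k] x) (f^[k + 1] x) := fun k => by
    simp [ChainStep, iterate_succ_apply', hε.le]
  induction n, hn using Nat.le_induction with
  | base => exact .single (hstep 0)
  | succ n _ ih => exact ih.tail (hstep n)

theorem Relation.TransGen.chainStep_replace_last {ε ε' : ℝ} {u v : X}
    (huv : TransGen (ChainStep f ε) u v) (hv : dist v y ≤ ε') :
    TransGen (ChainStep f (ε + ε')) u y := by
  obtain ⟨w, huw, hwv⟩ := TransGen.tail'_iff.1 huv
  have hε' : 0 ≤ ε' := dist_nonneg.trans hv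
  refine .tail' (ReflTransGen.mono (chainStep_mono (by linarith)) _ _ huw) ?_
  calc dist (f w) y ≤ dist (f w) v + dist v y := dist_triangle _ _ _
    _ ≤ ε + ε' := add_le_add hwv hv

theorem Relation.TransGen.chainStep_replace_first {ε ε' : ℝ} {u v : X}
    (huv : TransGen (ChainStep f ε) u v) (hu : dist (f x) (f u) ≤ ε') :
    TransGen (ChainStep f (ε + ε')) x v := by
  obtain ⟨w, huw, hwv⟩ := TransGen.head'_iff.1 huv
  have hε' : 0 ≤ ε' := dist_nonneg.trans hu
  refine .head' ?_ (ReflTransGen.mono (chainStep_mono (by linarith)) _ _ hwv)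
  calc dist (f x) w ≤ dist (f x) (f u) + dist (f u) w := dist_triangle _ _ _
    _ ≤ ε + ε' := by rw [add_comm ε]; exact add_le_add hu huw

theorem isClosed_setOf_chainRel (hf : Continuous f) :
    IsClosed {p : X × X | ChainRel f p.1 p.2} := by
  rw [← closure_subset_iff_isClosed]
  rintro ⟨x, y⟩ hxy
  change ChainRel f x y
  rw [chainRel_iff_transGen]
  intro ε hε
  obtain ⟨δ, hδ, hfx⟩ := Metric.continuous_iff.1 hf x (ε / 3) (by positivity)
  obtain ⟨⟨u, v⟩, huv, hd⟩ := Metric.mem_closure_iff.1 hxy (min δ (ε / 3)) (by positivity)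
  rw [Prod.dist_eq, max_lt_iff, lt_min_iff, lt_min_iff] at hd
  have hu : dist (f x) (f u) ≤ ε / 3 := by
    rw [dist_comm]; exact (hfx u (by rw [dist_comm]; exact hd.1.1)).le
  have hv : dist v y ≤ ε / 3 := by rw [dist_comm]; exact hd.2.2.le
  have := ((chainRel_iff_transGen.1 huv (ε / 3) (by positivity)).chainStep_replace_last
    hv).chainStep_replace_first hu
  rwa [show ε / 3 + ε / 3 + ε / 3 = ε by ring] at this

theorem ChainRel.apply_left (hf : Continuous f) (hxy : ChainRel f x y) (hy : ChainRel f y y) :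
    ChainRel f (f x) y := by
  rw [chainRel_iff_transGen] at *
  intro ε hε
  obtain ⟨δ, hδ, hfx⟩ := Metric.continuous_iff.1 hf (f x) (ε / 2) (by positivity)
  set η := min (δ / 2) (ε / 2)
  have hη : 0 < η := by positivity
  have hηδ : η < δ := (min_le_left _ _).trans_lt (half_lt_self hδ)
  have hηε : η ≤ ε / 2 := min_le_right _ _
  -- Appending the loop at `y` guarantees a second point `b` after `a` to jump to from `f x`.
  obtain ⟨a, hxa, hay⟩ := TransGen.head'_iff.1 (hxy η hη)
  obtain ⟨b, hab, hby⟩ := TransGen.head'_iff.1 (TransGen.trans_right hay (hy η hη))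
  refine .head' ?_ (ReflTransGen.mono (chainStep_mono (hηε.trans (half_le_self hε.le))) _ _ hby)
  have hfa : dist (f (f x)) (f a) < ε / 2 := by
    rw [dist_comm]; exact hfx a (by rw [dist_comm]; exact hxa.trans_lt hηδ)
  calc dist (f (f x)) b ≤ dist (f (f x)) (f a) + dist (f a) b := dist_triangle _ _ _
    _ ≤ ε / 2 + ε / 2 := add_le_add hfa.le (hab.trans hηε)
    _ = ε := add_halves ε

theorem ChainRel.iterate_left (hf : Continuous f) (hy : ChainRel f y y) (n : ℕ) :
    ChainRel f (f^[n] y) y := by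
  induction n with
  | zero => exact hy
  | succ n ih => rw [iterate_succ_apply']; exact ih.apply_left hf hy

theorem ChainRel.map {Y : Type*} [MetricSpace Y] {g : Y → Y} {h : X → Y}
    (hh : UniformContinuous h) (hsemi : Semiconj h f g) (hxy : ChainRel f x y) :
    ChainRel g (h x) (h y) := by
  rw [chainRel_iff_transGen] at *
  intro ε hε
  obtain ⟨δ, hδ, hδh⟩ := Metric.uniformContinuous_iff.1 hh ε hε
  refine TransGen.lift h (fun a b hab => ?_) _ _ (hxy (δ / 2) (by positivity))
  change dist (g (h a)) (h b) ≤ ε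
  rw [← hsemi a]
  exact (hδh (hab.trans_lt (by linarith))).le

section OmegaLimit

variable (hf : Continuous f) (hz : MapClusterPt z atTop fun n => f^[n] x)
include hf hz

theorem chainRel_of_mapClusterPt : ChainRel f x z :=
  ((isClosed_setOf_chainRel hf).preimage (Continuous.prodMk_right x)).mem_of_mapClusterPt hz
    (eventually_atTop.2 ⟨1, fun _ hn => chainRel_iterate_s8 f x hn⟩)

theorem ChainRel.of_mapClusterPt (hx : ChainRel f x x) : ChainRel f z x :=
  ((isClosed_setOf_chainRel hf).preimage (Continuous.prodMk_left x)).mem_of_mapClusterPt hz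
    (Eventually.of_forall (hx.iterate_left hf))

theorem chainRel_self_of_mapClusterPt : ChainRel f z z := by
  have hshift : ∀ n, MapClusterPt z atTop fun m => f^[m] (f^[n] x) := fun n => by
    simp_rw [← iterate_add_apply]
    rw [← comp_def (fun k => f^[k] x) (· + n), mapClusterPt_comp, map_add_atTop_eq_nat]
    exact hz
  exact ((isClosed_setOf_chainRel hf).preimage (Continuous.prodMk_left z)).mem_of_mapClusterPt hz
    (Eventually.of_forall fun n => chainRel_of_mapClusterPt hf (hshift n))

end OmegaLimit

def chainClass (f : X → X) (x : X) : Set X := {y | ChainRel f x y ∧ ChainRel f y x}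

theorem chainClass_eq_of_mem (hy : y ∈ chainClass f x) : chainClass f y = chainClass f x := by
  ext w
  exact ⟨fun hw => ⟨hy.1.trans hw.1, hw.2.trans hy.2⟩,
    fun hw => ⟨hy.2.trans hw.1, hw.2.trans hy.1⟩⟩

variable {Y : Type*} [MetricSpace Y] {g : Y → Y} {h : X → Y}

theorem mapsTo_chainClass (hh : UniformContinuous h) (hsemi : Semiconj h f g) :
    Set.MapsTo h (chainClass f x) (chainClass g (h x)) :=
  fun _ hy => ⟨hy.1.map hh hsemi, hy.2.map hh hsemi⟩

theorem biUnion_chainClass_image (hh : UniformContinuous h) (hsemi : Semiconj h f g)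
    (hx : ChainRel f x x) : ⋃ y ∈ chainClass f x, chainClass g (h y) = chainClass g (h x) := by
  refine subset_antisymm (Set.iUnion₂_subset fun y hy => ?_) ?_
  · exact (chainClass_eq_of_mem (mapsTo_chainClass hh hsemi hy)).subset
  · exact Set.subset_biUnion_of_mem (u := fun y => chainClass g (h y))
      (⟨hx, hx⟩ : x ∈ chainClass f x)

theorem exists_chainRel_self_chainClass_eq [CompactSpace X] (hf : Continuous f)
    (hg : Continuous g) (hh : Continuous h) (hsemi : Semiconj h f g)
    (hx : ChainRel g (h x) (h x)) :
    ∃ z, ChainRel f z z ∧ chainClass g (h x) = chainClass g (h z) := by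
  obtain ⟨z, hz⟩ := exists_clusterPt_of_compactSpace (map (fun n => f^[n] x) atTop)
  have hhz : MapClusterPt (h z) atTop fun n => g^[n] (h x) := by
    simpa only [comp_def, (hsemi.iterate_right _).eq] using
      MapClusterPt.continuousAt_comp hh.continuousAt hz
  refine ⟨z, chainRel_self_of_mapClusterPt hf hz, (chainClass_eq_of_mem ?_).symm⟩
  exact ⟨chainRel_of_mapClusterPt hg hhz, hx.of_mapClusterPt hg hhz⟩

end ChainRel

theorem stmt_8_general {X₁ X₂ : Type*} [MetricSpace X₁] [MetricSpace X₂]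
    [CompactSpace X₁]
    (f₁ : X₁ → X₁) (f₂ : X₂ → X₂) (hf₁ : Continuous f₁) (hf₂ : Continuous f₂)
    (h : X₁ → X₂) (hh : Continuous h) (hsurj : Function.Surjective h)
    (hcomm : h ∘ f₁ = f₂ ∘ h)
    (hfin : {B : Set X₁ | IsBasicSet f₁ B}.Finite) :
    {B : Set X₂ | IsBasicSet f₂ B}.Finite ∧
      {B : Set X₂ | IsBasicSet f₂ B}.ncard ≤ {B : Set X₁ | IsBasicSet f₁ B}.ncard := by
  have hsemi : Semiconj h f₁ f₂ := fun a => congrFun hcomm a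
  have huc : UniformContinuous h := CompactSpace.uniformContinuous_of_continuous hh
  set Ψ : Set X₁ → Set X₂ := fun B => ⋃ x ∈ B, chainClass f₂ (h x)
  have hcover : {B : Set X₂ | IsBasicSet f₂ B} ⊆ Ψ '' {B : Set X₁ | IsBasicSet f₁ B} := by
    rintro _ ⟨y, hy, rfl⟩
    obtain ⟨x, rfl⟩ := hsurj y
    obtain ⟨z, hz, hxz⟩ := exists_chainRel_self_chainClass_eq hf₁ hf₂ hh hsemi hy
    exact ⟨chainClass f₁ z, ⟨z, hz, rfl⟩, (biUnion_chainClass_image huc hsemi hz).trans hxz.symm⟩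
  exact ⟨(hfin.image Ψ).subset hcover,
    (Set.ncard_le_ncard hcover (hfin.image Ψ)).trans (Set.ncard_image_le hfin)⟩

/-- if `h` is a continuous surjection mapping `f₁` to `f₂` and
`f₁` has finitely many chain components, then `f₂` has at most as many chain
components as `f₁`. -/
theorem stmt_8 {X₁ X₂ : Type*} [MetricSpace X₁] [MetricSpace X₂]
    [CompactSpace X₁] [CompactSpace X₂]
    (f₁ : X₁ → X₁) (f₂ : X₂ → X₂) (hf₁ : Continuous f₁) (hf₂ : Continuous f₂)
    (h : X₁ → X₂) (hh : Continuous h) (hsurj : Function.Surjective h)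
    (hcomm : h ∘ f₁ = f₂ ∘ h)
    (hfin : {B : Set X₁ | IsBasicSet f₁ B}.Finite) :
    {B : Set X₂ | IsBasicSet f₂ B}.Finite ∧
      {B : Set X₂ | IsBasicSet f₂ B}.ncard ≤ {B : Set X₁ | IsBasicSet f₁ B}.ncard :=
  stmt_8_general f₁ f₂ hf₁ hf₂ h hh hsurj hcomm hfin
end

section
/- Let G be a relation on a finite set K with domain all of K, and let K_G ⊆ K^ℕ be the space of sequences s with (sᵢ, s_{i+1}) ∈ G for all i, with the shift map S. For every s ∈ K_G there exists a chain component (basic set) B of G and an index k such that sᵢ ∈ B for all i ≥ k. -/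
/-- `B` is a basic set (chain component) of a relation `G` on a finite set:
an equivalence class of `𝒪G ∩ 𝒪G⁻¹` on the set of `G`-periodic points, where
`𝒪G = ⋃_{n≥1} Gⁿ` is the transitive closure. -/
def IsBasicSetRel {K : Type*} (G : K → K → Prop) (B : Set K) : Prop :=
  ∃ s, Relation.TransGen G s s ∧
    B = {t | Relation.TransGen G s t ∧ Relation.TransGen G t s}

lemma chain_transGen {K : Type*} (G : K → K → Prop)
    (s : ℕ → K) (hs : ∀ i, G (s i) (s (i + 1))) :
    ∀ i j, i < j → Relation.TransGen G (s i) (s j) := by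
  intro i j
  induction j with
  | zero => omega
  | succ n ih =>
    intro hij
    rcases Nat.lt_succ_iff_lt_or_eq.mp hij with h | h
    · exact (ih h).tail (hs n)
    · subst h; exact Relation.TransGen.single (hs i)

/-- for a relation `G` with full domain on a finite set `K`,
every sample path `s ∈ K_G` eventually lies in a single basic set of `G`. -/
theorem stmt_9 {K : Type*} [Fintype K] (G : K → K → Prop)
    (hdom : ∀ s, ∃ t, G s t)
    (s : ℕ → K) (hs : ∀ i, G (s i) (s (i + 1))) :
    ∃ B : Set K, IsBasicSetRel G B ∧ ∃ k : ℕ, ∀ i, k ≤ i → s i ∈ B := by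
  obtain ⟨x, hx⟩ := Finite.exists_infinite_fiber s
  have hinf : (s ⁻¹' {x}).Infinite := by
    rw [Set.infinite_coe_iff] at hx; exact hx
  have hbig : ∀ n : ℕ, ∃ m, n < m ∧ s m = x := by
    intro n
    obtain ⟨m, hm, hmn⟩ := hinf.exists_gt n
    exact ⟨m, hmn, hm⟩
  obtain ⟨k, -, hk⟩ := hbig 0
  have hper : Relation.TransGen G x x := by
    obtain ⟨m, hm, hmx⟩ := hbig k
    have := chain_transGen G s hs k m hm
    rwa [hk, hmx] at this
  refine ⟨_, ⟨x, hper, rfl⟩, k, fun i hi => ?_⟩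
  constructor
  · rcases eq_or_lt_of_le hi with h | h
    · rw [← h, hk]; exact hper
    · have := chain_transGen G s hs k i h; rwa [hk] at this
  · obtain ⟨m, hm, hmx⟩ := hbig i
    have := chain_transGen G s hs i m hm
    rwa [hmx] at this
end

section
/- Let G be a relation on a finite set K with domain K, and B a basic set of G. Then the restriction of the shift S to B_G = K_G ∩ B^ℕ is topologically transitive. -/
lemma open_cyl {K : Type*} [TopologicalSpace K] [DiscreteTopology K]
    {U : Set (ℕ → K)} (hU : IsOpen U) {u : ℕ → K} (hu : u ∈ U) :
    ∃ N, ∀ g : ℕ → K, (∀ i ≤ N, g i = u i) → g ∈ U := by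
  obtain ⟨I, t, hI, hsub⟩ := isOpen_pi_iff.mp hU u hu
  refine ⟨I.sup id, fun g hg => hsub fun a ha => ?_⟩
  rw [hg a (Finset.le_sup (f := id) ha)]
  exact (hI a ha).2

lemma chain_of_transGen {K : Type*} {G : K → K → Prop} {a b : K}
    (h : Relation.TransGen G a b) :
    ∃ k, 0 < k ∧ ∃ c : ℕ → K, c 0 = a ∧ c k = b ∧
      (∀ i, i < k → G (c i) (c (i + 1))) ∧
      (∀ i, 0 < i → i < k →
        Relation.TransGen G a (c i) ∧ Relation.TransGen G (c i) b) := by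
  induction h with
  | single hab =>
      rename_i d
      refine ⟨1, one_pos, fun i => if i = 0 then a else d, by simp, by simp, ?_, ?_⟩
      · intro i hi
        interval_cases i
        simpa using hab
      · intro i hi hi'
        omega
  | tail hab hbc ih =>
      rename_i b' d
      obtain ⟨k, hk, c, hc0, hck, hstep, hmid⟩ := ih
      refine ⟨k + 1, by omega, fun i => if i ≤ k then c i else d, by simp [hc0],
        by simp, ?_, ?_⟩
      · intro i hi
        rcases lt_or_eq_of_le (Nat.lt_succ_iff.mp hi) with h1 | h1
        · have : i ≤ k := by omega
          have : i + 1 ≤ k := by omega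
          simpa [*] using hstep i h1
        · subst h1
          simpa [hck] using hbc
      · intro i hi hi'
        rcases lt_or_eq_of_le (Nat.lt_succ_iff.mp hi') with h1 | h1
        · have hle : i ≤ k := by omega
          obtain ⟨h2, h3⟩ := hmid i hi h1
          exact ⟨by simpa [hle] using h2, by simpa [hle] using (h3.tail hbc)⟩
        · subst h1
          simp only [le_refl, if_pos]
          exact ⟨hck ▸ hab, hck ▸ Relation.TransGen.single hbc⟩



/-- The sample path space of `G` restricted to `B`:
`B_G = K_G ∩ B^ℕ`. -/
def pathsIn {K : Type*} (G : K → K → Prop) (B : Set K) : Set (ℕ → K) :=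
  {s | (∀ i, G (s i) (s (i + 1))) ∧ ∀ i, s i ∈ B}

/-- for a basic set `B` of a relation `G` with full domain on a
finite set, the restriction of the shift to `B_G = K_G ∩ B^ℕ` is topologically
transitive: for open `U, V` meeting `B_G` there is `n` and a point of `B_G` in
`U` whose `n`-th shift lies in `V`. -/
theorem stmt_10 {K : Type*} [Fintype K] [TopologicalSpace K] [DiscreteTopology K]
    (G : K → K → Prop) (hdom : ∀ s, ∃ t, G s t)
    (B : Set K) (hB : IsBasicSetRel G B)
    (U V : Set (ℕ → K)) (hU : IsOpen U) (hV : IsOpen V)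
    (hUne : (U ∩ pathsIn G B).Nonempty) (hVne : (V ∩ pathsIn G B).Nonempty) :
    ∃ (n : ℕ) (s : ℕ → K), s ∈ pathsIn G B ∧ s ∈ U ∧
      (fun i => s (i + n)) ∈ V := by
  obtain ⟨u, huU, huG, huB⟩ := hUne
  obtain ⟨v, hvV, hvG, hvB⟩ := hVne
  obtain ⟨s₀, hs₀, hBeq⟩ := hB
  obtain ⟨N, hN⟩ := open_cyl hU huU
  -- bridge from u N to v 0
  have huN : u N ∈ B := huB N
  have hv0 : v 0 ∈ B := hvB 0
  rw [hBeq] at huN hv0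
  have htrans : Relation.TransGen G (u N) (v 0) := huN.2.trans hv0.1
  obtain ⟨k, hk, c, hc0, hck, hstep, hmid⟩ := chain_of_transGen htrans
  set s : ℕ → K := fun i =>
    if i ≤ N then u i else if i < N + k then c (i - N) else v (i - (N + k)) with hs
  have hsval : ∀ i, i ≤ N → s i = u i := by intro i hi; simp [hs, hi]
  have hsmid : ∀ i, N < i → i < N + k → s i = c (i - N) := by
    intro i h1 h2; simp [hs, Nat.not_le.mpr h1, h2]
  have hsend : ∀ i, N + k ≤ i → s i = v (i - (N + k)) := by
    intro i hi
    have h1 : ¬ i ≤ N := by omega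
    have h2 : ¬ i < N + k := by omega
    simp [hs, h1, h2]
  have hsc : ∀ i, N ≤ i → i ≤ N + k → s i = c (i - N) := by
    intro i h1 h2
    rcases eq_or_lt_of_le h1 with h | h
    · rw [hsval i (by omega), ← h]
      simp [hc0]
    · rcases eq_or_lt_of_le h2 with h' | h'
      · rw [hsend i (by omega), h']
        simp [hck]
      · exact hsmid i h h'
  refine ⟨N + k, s, ⟨?_, ?_⟩, hN s (fun i hi => hsval i hi), ?_⟩
  · -- G steps
    intro i
    rcases lt_or_ge i N with h | h
    · rw [hsval i (by omega), hsval (i + 1) (by omega)]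
      exact huG i
    · rcases lt_or_ge i (N + k) with h' | h'
      · rw [hsc i h (by omega), hsc (i + 1) (by omega) (by omega)]
        have : i + 1 - N = (i - N) + 1 := by omega
        rw [this]
        exact hstep (i - N) (by omega)
      · rw [hsend i h', hsend (i + 1) (by omega)]
        have : i + 1 - (N + k) = (i - (N + k)) + 1 := by omega
        rw [this]
        exact hvG (i - (N + k))
  · -- B membership
    intro i
    rcases le_or_gt i N with h | h
    · rw [hsval i h]; exact huB i
    · rcases lt_or_ge i (N + k) with h' | h'
      · rw [hsmid i h h']
        obtain ⟨h2, h3⟩ := hmid (i - N) (by omega) (by omega)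
        rw [hBeq]
        exact ⟨huN.1.trans h2, h3.trans hv0.2⟩
      · rw [hsend i h']; exact hvB _
  · -- shift lands in V
    have : (fun i => s (i + (N + k))) = v := by
      funext i
      rw [hsend (i + (N + k)) (by omega)]
      congr 1
      omega
    rw [this]
    exact hvV
end

section
/- Let G be a relation on a finite set K with domain K. For every s ∈ K there exists a sequence s ∈ K_G beginning at s whose eventual basic set (endset) is a terminal basic set of G. -/
/-- A basic set `B` is terminal if `𝒪G(B) ⊆ B`. -/
def IsTerminalBasicSet {K : Type*} (G : K → K → Prop) (B : Set K) : Prop :=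
  IsBasicSetRel G B ∧ ∀ s ∈ B, ∀ t, Relation.TransGen G s t → t ∈ B

/-- In a finite type, every point reaches a "maximal" point of the
reachability preorder. -/
lemma exists_max_reach {K : Type*} [Fintype K] (G : K → K → Prop) (s : K) :
    ∃ t, Relation.ReflTransGen G s t ∧
      ∀ u, Relation.ReflTransGen G t u → Relation.ReflTransGen G u t := by
  classical
  set r : K → K → Prop := fun b a =>
    Relation.ReflTransGen G a b ∧ ¬ Relation.ReflTransGen G b a with hr
  haveI : IsTrans K r := ⟨by
    rintro a b c ⟨hba, hnab⟩ ⟨hcb, hnbc⟩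
    refine ⟨hcb.trans hba, fun h => hnab (h.trans hcb)⟩⟩
  haveI : IsIrrefl K r := ⟨fun a h => h.2 h.1⟩
  have hwf : WellFounded r := Finite.wellFounded_of_trans_of_irrefl r
  obtain ⟨t, hts, hmin⟩ := hwf.has_min {u | Relation.ReflTransGen G s u}
    ⟨s, Relation.ReflTransGen.refl⟩
  refine ⟨t, hts, fun u htu => ?_⟩
  by_contra hnut
  exact hmin u (hts.trans htu) ⟨htu, hnut⟩

/-- Extend a finite reachability to an infinite sample path passing through. -/
lemma exists_path {K : Type*} (G : K → K → Prop) (hdom : ∀ s, ∃ t, G s t)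
    {s t : K} (h : Relation.ReflTransGen G s t) :
    ∃ (c : ℕ → K) (n : ℕ), c 0 = s ∧ (∀ i, G (c i) (c (i + 1))) ∧ c n = t := by
  classical
  choose f hf using hdom
  induction h using Relation.ReflTransGen.head_induction_on with
  | refl =>
    refine ⟨fun i => f^[i] t, 0, by simp, fun i => ?_, by simp⟩
    show G (f^[i] t) (f^[i + 1] t)
    rw [Function.iterate_succ_apply']
    exact hf _
  | head hab _ ih =>
    rename_i a b _
    obtain ⟨c, n, hc0, hstep, hcn⟩ := ih
    refine ⟨fun i => if i = 0 then a else c (i - 1), n + 1, by simp, fun i => ?_, by simp [hcn]⟩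
    cases i with
    | zero => simpa [hc0] using hab
    | succ j => simpa using hstep j

/-- for a relation `G` with full domain on a finite set, every
`s ∈ K` is the start of a sample path whose endset is a terminal basic set. -/
theorem stmt_12 {K : Type*} [Fintype K] (G : K → K → Prop)
    (hdom : ∀ s, ∃ t, G s t) (s : K) :
    ∃ c : ℕ → K, c 0 = s ∧ (∀ i, G (c i) (c (i + 1))) ∧
      ∃ B : Set K, IsTerminalBasicSet G B ∧ ∃ k : ℕ, ∀ i, k ≤ i → c i ∈ B := by
  classical
  obtain ⟨t, hst, hmax⟩ := exists_max_reach G s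
  obtain ⟨c, n, hc0, hstep, hcn⟩ := exists_path G hdom hst
  -- t lies on a cycle
  obtain ⟨w, htw⟩ := hdom t
  have htt : Relation.TransGen G t t :=
    Relation.TransGen.head' htw (hmax w (Relation.ReflTransGen.single htw))
  set B : Set K := {v | Relation.TransGen G t v ∧ Relation.TransGen G v t} with hB
  have hterm : ∀ x ∈ B, ∀ y, Relation.TransGen G x y → y ∈ B := by
    rintro x ⟨htx, hxt⟩ y hxy
    have hty : Relation.TransGen G t y := htx.trans hxy
    have hyt : Relation.ReflTransGen G y t := hmax y hty.to_reflTransGen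
    exact ⟨hty, Relation.TransGen.trans_right hyt htt⟩
  have htB : t ∈ B := ⟨htt, htt⟩
  refine ⟨c, hc0, hstep, B, ⟨⟨t, htt, rfl⟩, hterm⟩, n, ?_⟩
  intro i hi
  induction i, hi using Nat.le_induction with
  | base => rw [hcn]; exact htB
  | succ j _ ih => exact hterm _ ih _ (Relation.TransGen.single (hstep j))
end

section
/- Let Γ be a stochastic cover of a relation G on a finite set K with full domain. Then there exist ρ ∈ (0,1) and a positive integer n such that for all s ∈ K and all positive integers k, the probability (Γ^{nk})_{tran, s} of being in the transient set after nk steps starting from s is at most ρ^k. -/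
def Transient {K : Type*} (G : K → K → Prop) (s : K) : Prop :=
  ∀ B : Set K, IsTerminalBasicSet G B → s ∉ B

open Finset
open scoped Classical

section Helpers
variable {K : Type*} [Fintype K] (G : K → K → Prop) (Γ : Matrix K K ℝ)

lemma aux_closed {s t : K} (hs : ¬ Transient G s) (hG : G s t) : ¬ Transient G t := by
  unfold Transient at hs
  push_neg at hs
  obtain ⟨B, hB, hsB⟩ := hs
  intro ht
  exact ht B hB (hB.2 s hsB t (Relation.TransGen.single hG))

lemma aux_pow_nonneg (hnn : ∀ t s, 0 ≤ Γ t s) :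
    ∀ m t s, 0 ≤ (Γ ^ m) t s := by
  intro m
  induction m with
  | zero =>
      intro t s
      simp only [pow_zero, Matrix.one_apply]
      split <;> norm_num
  | succ m ih =>
      intro t s
      rw [pow_succ', Matrix.mul_apply]
      exact Finset.sum_nonneg fun u _ => mul_nonneg (hnn t u) (ih u s)

lemma aux_colsum (hcol : ∀ s, ∑ t, Γ t s = 1) :
    ∀ m s, ∑ t, (Γ ^ m) t s = 1 := by
  intro m
  induction m with
  | zero => intro s; simp [Matrix.one_apply]
  | succ m ih =>
      intro s
      simp only [pow_succ', Matrix.mul_apply]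
      rw [Finset.sum_comm]
      simp_rw [← Finset.sum_mul, hcol, one_mul]
      exact ih s

lemma aux_exists_reach (hdom : ∀ s, ∃ t, G s t) :
    ∀ s, ∃ w, (w = s ∨ Relation.TransGen G s w) ∧ ¬ Transient G w := by
  suffices h : ∀ n s, (univ.filter (fun u => u = s ∨ Relation.TransGen G s u)).card ≤ n →
      ∃ w, (w = s ∨ Relation.TransGen G s w) ∧ ¬ Transient G w by
    intro s; exact h _ s le_rfl
  intro n
  induction n with
  | zero =>
      intro s hs
      exfalso
      have : s ∈ univ.filter (fun u => u = s ∨ Relation.TransGen G s u) := by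
        simp
      have := Finset.card_pos.mpr ⟨s, this⟩
      omega
  | succ n ih =>
      intro s hs
      by_cases hmax : ∀ u, Relation.TransGen G s u → Relation.TransGen G u s
      · refine ⟨s, Or.inl rfl, ?_⟩
        obtain ⟨v, hv⟩ := hdom s
        have hss : Relation.TransGen G s s :=
          (Relation.TransGen.single hv).trans (hmax v (Relation.TransGen.single hv))
        intro hT
        exact hT {t | Relation.TransGen G s t ∧ Relation.TransGen G t s}
          ⟨⟨s, hss, rfl⟩, fun x hx y hxy => ⟨hx.1.trans hxy, hmax y (hx.1.trans hxy)⟩⟩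
          ⟨hss, hss⟩
      · push_neg at hmax
        obtain ⟨u, hsu, hus⟩ := hmax
        have hsub : (univ.filter (fun v => v = u ∨ Relation.TransGen G u v)) ⊂
            (univ.filter (fun v => v = s ∨ Relation.TransGen G s v)) := by
          constructor
          · intro v hv
            simp only [mem_filter, mem_univ, true_and] at hv ⊢
            rcases hv with rfl | h
            · exact Or.inr hsu
            · exact Or.inr (hsu.trans h)
          · intro hsub'
            have : s ∈ univ.filter (fun v => v = u ∨ Relation.TransGen G u v) := by
              apply hsub'; simp
            simp only [mem_filter, mem_univ, true_and] at this
            rcases this with rfl | h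
            · exact hus hsu
            · exact hus h
        have hcard := Finset.card_lt_card hsub
        obtain ⟨w, hw, hwT⟩ := ih u (by omega)
        refine ⟨w, Or.inr ?_, hwT⟩
        rcases hw with rfl | h
        · exact hsu
        · exact hsu.trans h

lemma aux_step_zero (hnn : ∀ t s, 0 ≤ Γ t s) (hcover : ∀ s t, 0 < Γ t s ↔ G s t)
    {u t : K} (hu : ¬ Transient G u) (ht : Transient G t) : Γ t u = 0 := by
  by_contra h
  have hpos : 0 < Γ t u := lt_of_le_of_ne (hnn t u) (Ne.symm h)
  exact (aux_closed G hu ((hcover u t).mp hpos)) ht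

lemma aux_pow_zero (hnn : ∀ t s, 0 ≤ Γ t s) (hcover : ∀ s t, 0 < Γ t s ↔ G s t) :
    ∀ m {u t : K}, ¬ Transient G u → Transient G t → (Γ ^ m) t u = 0 := by
  intro m
  induction m with
  | zero =>
      intro u t hu ht
      simp only [pow_zero, Matrix.one_apply]
      rw [if_neg]
      rintro rfl; exact hu ht
  | succ m ih =>
      intro u t hu ht
      rw [pow_succ', Matrix.mul_apply]
      apply Finset.sum_eq_zero
      intro v _
      by_cases hv : Transient G v
      · rw [ih hu hv, mul_zero]
      · rw [aux_step_zero G Γ hnn hcover hv ht, zero_mul]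

lemma aux_pos_path (hnn : ∀ t s, 0 ≤ Γ t s) (hcover : ∀ s t, 0 < Γ t s ↔ G s t)
    {s w : K} (h : Relation.TransGen G s w) : ∃ m, 1 ≤ m ∧ 0 < (Γ ^ m) w s := by
  induction h with
  | single hG => exact ⟨1, le_rfl, by rw [pow_one]; exact (hcover _ _).mpr hG⟩
  | tail h1 hG ih =>
      obtain ⟨m, hm, hpos⟩ := ih
      refine ⟨m + 1, by omega, ?_⟩
      rw [pow_succ', Matrix.mul_apply]
      apply Finset.sum_pos'
      · exact fun u _ => mul_nonneg (hnn _ u) (aux_pow_nonneg Γ hnn m u s)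
      · exact ⟨_, mem_univ _, mul_pos ((hcover _ _).mpr hG) hpos⟩

lemma aux_contract (hnn : ∀ t s, 0 ≤ Γ t s) (hcover : ∀ s t, 0 < Γ t s ↔ G s t)
    (j m : ℕ) (s : K) (ρ : ℝ)
    (hb : ∀ u, Transient G u → ∑ t ∈ univ.filter (fun t => Transient G t), (Γ ^ j) t u ≤ ρ) :
    ∑ t ∈ univ.filter (fun t => Transient G t), (Γ ^ (j + m)) t s
      ≤ ρ * ∑ u ∈ univ.filter (fun t => Transient G t), (Γ ^ m) u s := by
  have key : ∑ t ∈ univ.filter (fun t => Transient G t), (Γ ^ (j + m)) t s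
      = ∑ u, (∑ t ∈ univ.filter (fun t => Transient G t), (Γ ^ j) t u) * (Γ ^ m) u s := by
    rw [pow_add]
    simp only [Matrix.mul_apply]
    rw [Finset.sum_comm]
    simp_rw [Finset.sum_mul]
  rw [key, ← Finset.sum_filter_add_sum_filter_not univ (fun u => Transient G u)]
  have h2 : ∑ u ∈ univ.filter (fun u => ¬ Transient G u),
      (∑ t ∈ univ.filter (fun t => Transient G t), (Γ ^ j) t u) * (Γ ^ m) u s = 0 := by
    apply Finset.sum_eq_zero
    intro u hu
    simp only [mem_filter] at hu
    have : ∑ t ∈ univ.filter (fun t => Transient G t), (Γ ^ j) t u = 0 :=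
      Finset.sum_eq_zero fun t htm => by
        simp only [mem_filter] at htm
        exact aux_pow_zero G Γ hnn hcover j hu.2 htm.2
    rw [this, zero_mul]
  rw [h2, add_zero, Finset.mul_sum]
  apply Finset.sum_le_sum
  intro u hu
  simp only [mem_filter] at hu
  exact mul_le_mul_of_nonneg_right (hb u hu.2) (aux_pow_nonneg Γ hnn m u s)

lemma aux_mono (hnn : ∀ t s, 0 ≤ Γ t s) (hcol : ∀ s, ∑ t, Γ t s = 1)
    (hcover : ∀ s t, 0 < Γ t s ↔ G s t) (m : ℕ) (s : K) :
    ∀ i, ∑ t ∈ univ.filter (fun t => Transient G t), (Γ ^ (m + i)) t s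
      ≤ ∑ t ∈ univ.filter (fun t => Transient G t), (Γ ^ m) t s := by
  intro i
  induction i with
  | zero => simp
  | succ i ih =>
      have heq : m + (i + 1) = 1 + (m + i) := by omega
      rw [heq]
      calc ∑ t ∈ univ.filter (fun t => Transient G t), (Γ ^ (1 + (m + i))) t s
          ≤ 1 * ∑ u ∈ univ.filter (fun t => Transient G t), (Γ ^ (m + i)) u s := by
            apply aux_contract G Γ hnn hcover 1 (m + i) s 1
            intro u _
            rw [pow_one]
            calc ∑ t ∈ univ.filter (fun t => Transient G t), Γ t u
                ≤ ∑ t, Γ t u := Finset.sum_le_sum_of_subset_of_nonneg (filter_subset _ _)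
                  (fun t _ _ => hnn t u)
              _ = 1 := hcol u
        _ = _ := one_mul _
        _ ≤ _ := ih

end Helpers

open scoped Classical in
/-- for a stochastic cover `Γ` of a relation `G` with full domain
on a finite set `K`, there are `ρ ∈ (0,1)` and `n ≥ 1` so that for all `s` and
all `k ≥ 1`, the probability of being transient after `n·k` steps from `s` is
at most `ρ^k`. -/
theorem stmt_14 {K : Type*} [Fintype K] (G : K → K → Prop)
    (hdom : ∀ s, ∃ t, G s t)
    (Γ : Matrix K K ℝ)
    (hnn : ∀ t s, 0 ≤ Γ t s)
    (hcol : ∀ s, ∑ t, Γ t s = 1)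
    (hcover : ∀ s t, 0 < Γ t s ↔ G s t) :
    ∃ ρ : ℝ, 0 < ρ ∧ ρ < 1 ∧ ∃ n : ℕ, 1 ≤ n ∧
      ∀ (s : K) (k : ℕ), 1 ≤ k →
        ∑ t ∈ Finset.univ.filter (fun t => Transient G t), (Γ ^ (n * k)) t s
          ≤ ρ ^ k := by
  rcases isEmpty_or_nonempty K with hK | hK
  · exact ⟨1/2, by norm_num, by norm_num, 1, le_rfl, fun s => isEmptyElim s⟩
  · have hKne : (univ : Finset K).Nonempty := univ_nonempty
    have step1 : ∀ s : K, ∃ m, 1 ≤ m ∧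
        ∑ t ∈ univ.filter (fun t => Transient G t), (Γ ^ m) t s < 1 := by
      intro s
      obtain ⟨w, hw, hwT⟩ := aux_exists_reach G hdom s
      have hmain : ∃ m w', 1 ≤ m ∧ ¬ Transient G w' ∧ 0 < (Γ ^ m) w' s := by
        rcases hw with rfl | h
        · obtain ⟨t, ht⟩ := hdom w
          exact ⟨1, t, le_rfl, aux_closed G hwT ht,
            by rw [pow_one]; exact (hcover w t).mpr ht⟩
        · obtain ⟨m, hm, hpos⟩ := aux_pos_path G Γ hnn hcover h
          exact ⟨m, w, hm, hwT, hpos⟩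
      obtain ⟨m, w', hm, hw'T, hpos⟩ := hmain
      refine ⟨m, hm, ?_⟩
      have hsplit := Finset.sum_filter_add_sum_filter_not univ (fun t => Transient G t)
        (fun t => (Γ ^ m) t s)
      have htot : ∑ t, (Γ ^ m) t s = 1 := aux_colsum Γ hcol m s
      have hlow : (Γ ^ m) w' s ≤
          ∑ t ∈ univ.filter (fun t => ¬ Transient G t), (Γ ^ m) t s :=
        Finset.single_le_sum (fun t _ => aux_pow_nonneg Γ hnn m t s) (by simp [hw'T])
      linarith
    choose mfun hm1 hmlt using step1
    set n : ℕ := univ.sup' hKne mfun with hn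
    have hmn : ∀ s, mfun s ≤ n := fun s => Finset.le_sup' mfun (mem_univ s)
    have hn1 : 1 ≤ n := le_trans (hm1 hKne.choose) (hmn hKne.choose)
    have hTn : ∀ s, ∑ t ∈ univ.filter (fun t => Transient G t), (Γ ^ n) t s < 1 := by
      intro s
      have heq : n = mfun s + (n - mfun s) := by have := hmn s; omega
      calc ∑ t ∈ univ.filter (fun t => Transient G t), (Γ ^ n) t s
          = ∑ t ∈ univ.filter (fun t => Transient G t), (Γ ^ (mfun s + (n - mfun s))) t s := by
            rw [← heq]
        _ ≤ ∑ t ∈ univ.filter (fun t => Transient G t), (Γ ^ (mfun s)) t s :=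
            aux_mono G Γ hnn hcol hcover (mfun s) s (n - mfun s)
        _ < 1 := hmlt s
    set ρ0 : ℝ := univ.sup' hKne
      (fun s => ∑ t ∈ univ.filter (fun t => Transient G t), (Γ ^ n) t s) with hρ0
    set ρ : ℝ := max ρ0 (1/2) with hρdef
    have hρpos : 0 < ρ := lt_of_lt_of_le (by norm_num) (le_max_right _ _)
    have hρlt : ρ < 1 :=
      max_lt ((Finset.sup'_lt_iff hKne).mpr fun s _ => hTn s) (by norm_num)
    have hbound : ∀ s, ∑ t ∈ univ.filter (fun t => Transient G t), (Γ ^ n) t s ≤ ρ :=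
      fun s => le_trans (Finset.le_sup'
        (fun s => ∑ t ∈ univ.filter (fun t => Transient G t), (Γ ^ n) t s) (mem_univ s))
        (le_max_left _ _)
    refine ⟨ρ, hρpos, hρlt, n, hn1, ?_⟩
    have main : ∀ k, 1 ≤ k → ∀ s,
        ∑ t ∈ univ.filter (fun t => Transient G t), (Γ ^ (n * k)) t s ≤ ρ ^ k := by
      intro k
      induction k with
      | zero => omega
      | succ k ih =>
          intro _ s
          rcases Nat.eq_zero_or_pos k with rfl | hk
          · simpa using hbound s
          · have heq : n * (k + 1) = n + n * k := by ring
            rw [heq]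
            calc ∑ t ∈ univ.filter (fun t => Transient G t), (Γ ^ (n + n * k)) t s
                ≤ ρ * ∑ u ∈ univ.filter (fun t => Transient G t), (Γ ^ (n * k)) u s :=
                  aux_contract G Γ hnn hcover n (n * k) s ρ (fun u _ => hbound u)
              _ ≤ ρ * ρ ^ k :=
                  mul_le_mul_of_nonneg_left (ih hk s) hρpos.le
              _ = ρ ^ (k + 1) := (pow_succ' ρ k).symm
    exact fun s k hk => main k hk s
end

section
/- In a special two-alphabet model (γ, J : K* → K both maps, J surjective) with distribution data ν : K* → [0,1] (ν positive and Σ{ν(s*) : J(s*)=s} = 1 for all s), define the induced stochastic covers Γ of G = γ∘J⁻¹ and Γ* of G* = J⁻¹∘γ. If v is a stationary distribution for Γ, then v*(s*) := v(J(s*))·ν(s*) defines a stationary distribution for Γ*. -/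
open scoped Classical in
/-- in a special two-alphabet model (`γ, J : K* → K` maps, `J`
surjective) with distribution data `ν`, if `v` is a stationary distribution
for the induced stochastic cover `Γ` of `G = γ∘J⁻¹`, then
`v*(s*) = v(J s*)·ν(s*)` is a stationary distribution for the induced
stochastic cover `Γ*` of `G* = J⁻¹∘γ`. -/
theorem stmt_17 {Ks K : Type*} [Fintype Ks] [Fintype K]
    (γ : Ks → K) (J : Ks → K) (hJsurj : Function.Surjective J)
    (ν : Ks → ℝ) (hνpos : ∀ s', 0 < ν s')
    (hνsum : ∀ s : K, ∑ s' ∈ Finset.univ.filter (fun s' => J s' = s), ν s' = 1)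
    (Γ : K → K → ℝ)
    (hΓ : ∀ s₁ s₂, Γ s₂ s₁ =
      ∑ s' ∈ Finset.univ.filter (fun s' => J s' = s₁ ∧ γ s' = s₂), ν s')
    (Γs : Ks → Ks → ℝ)
    (hΓs : ∀ s₁ s₂, Γs s₂ s₁ = if J s₂ = γ s₁ then ν s₂ else 0)
    (v : K → ℝ) (hvnn : ∀ s, 0 ≤ v s) (hvsum : ∑ s, v s = 1)
    (hstat : ∀ t, ∑ s, Γ t s * v s = v t) :
    (∀ s', 0 ≤ v (J s') * ν s') ∧
    (∑ s', v (J s') * ν s') = 1 ∧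
    (∀ t', ∑ s', Γs t' s' * (v (J s') * ν s') = v (J t') * ν t') := by
  refine ⟨fun s' => mul_nonneg (hvnn _) (hνpos _).le, ?_, ?_⟩
  · rw [← Finset.sum_fiberwise Finset.univ J (fun s' => v (J s') * ν s')]
    calc (∑ s : K, ∑ s' ∈ Finset.univ.filter (fun s' => J s' = s), v (J s') * ν s')
        = ∑ s : K, v s * ∑ s' ∈ Finset.univ.filter (fun s' => J s' = s), ν s' := by
          refine Finset.sum_congr rfl fun s _ => ?_
          rw [Finset.mul_sum]
          refine Finset.sum_congr rfl fun s' hs' => ?_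
          simp only [Finset.mem_filter] at hs'
          rw [hs'.2]
      _ = 1 := by simp only [hνsum, mul_one]; exact hvsum
  · intro t'
    have key : ∑ s', Γs t' s' * (v (J s') * ν s')
        = ν t' * ∑ s', (if J t' = γ s' then v (J s') * ν s' else 0) := by
      rw [Finset.mul_sum]
      refine Finset.sum_congr rfl fun s' _ => ?_
      rw [hΓs]
      split <;> ring
    rw [key]
    have h2 : (∑ s', if J t' = γ s' then v (J s') * ν s' else 0)
        = ∑ s, Γ (J t') s * v s := by
      rw [← Finset.sum_fiberwise Finset.univ J
        (fun s' => if J t' = γ s' then v (J s') * ν s' else 0)]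
      refine Finset.sum_congr rfl fun s _ => ?_
      rw [hΓ, Finset.sum_mul, ← Finset.sum_filter_add_sum_filter_not
        (Finset.univ.filter (fun s' => J s' = s)) (fun s' => J t' = γ s')]
      have hz : ∑ s' ∈ (Finset.univ.filter (fun s' => J s' = s)).filter
          (fun s' => ¬ J t' = γ s'), (if J t' = γ s' then v (J s') * ν s' else 0) = 0 := by
        refine Finset.sum_eq_zero fun s' hs' => ?_
        simp only [Finset.mem_filter] at hs'
        rw [if_neg hs'.2]
      rw [hz, add_zero, Finset.filter_filter]
      refine Finset.sum_nbij' id id ?_ ?_ (fun _ _ => rfl) (fun _ _ => rfl) ?_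
      · intro s' hs'
        simp only [Finset.mem_filter, Finset.mem_univ, true_and, id] at hs' ⊢
        exact ⟨hs'.1, hs'.2.symm⟩
      · intro s' hs'
        simp only [Finset.mem_filter, Finset.mem_univ, true_and, id] at hs' ⊢
        exact ⟨hs'.1, hs'.2.symm⟩
      · intro s' hs'
        simp only [Finset.mem_filter, Finset.mem_univ, true_and, id] at hs'
        rw [if_pos hs'.2, hs'.1]
        simp [mul_comm]
    rw [h2, hstat]
    ring
end

section
/- Let P be an (m+1)×(d+1) nonnegative matrix with columns summing to 1, viewed as a linear map from the subspace of ℝ^{d+1} of vectors with coordinate sum 0 to the subspace of ℝ^{m+1} of vectors with coordinate sum 0, with the ℓ¹ norm. Suppose there exists θ > 0 such that for every pair of columns j₁, j₂ there is a row i₀ with P_{i₀j₁} ≥ θ and P_{i₀j₂} ≥ θ. Then ‖Pa‖₁ ≤ (1 − θ/d)·‖a‖₁ for every a with coordinate sum 0. -/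
/-!
Split `a = a⁺ - a⁻`; since `∑ a = 0` both parts have the same mass `S = ‖a‖₁ / 2`, and
pairing them gives `S • a = ∑_{j₁ j₂} a⁺_{j₁} a⁻_{j₂} (e_{j₁} - e_{j₂})`. By the triangle
inequality, `S ‖P a‖₁ ≤ ∑_{j₁ j₂} a⁺_{j₁} a⁻_{j₂} ‖P e_{j₁} - P e_{j₂}‖₁`. Two probability
columns that are both `≥ θ` in a common row overlap in mass at least `θ`, so their ℓ¹ distance
is at most `2 (1 - θ)`. Hence `‖P a‖₁ ≤ (1 - θ) ‖a‖₁`, which is stronger since `θ / d ≤ θ`.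
-/

open Finset

section
variable {ι κ : Type*} [Fintype ι] [Fintype κ]

lemma abs_sub_eq_add_sub_two_mul_min (x y : ℝ) : |x - y| = x + y - 2 * min x y := by
  rw [← max_sub_min_eq_abs', ← min_add_max x y]; ring

lemma sum_abs_sub_le_two_mul_one_sub {p q : ι → ℝ} (hp : ∀ i, 0 ≤ p i) (hq : ∀ i, 0 ≤ q i)
    (hp1 : ∑ i, p i = 1) (hq1 : ∑ i, q i = 1) {θ : ℝ} (hθ : ∃ i, θ ≤ p i ∧ θ ≤ q i) :
    ∑ i, |p i - q i| ≤ 2 * (1 - θ) := by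
  obtain ⟨i₀, hp₀, hq₀⟩ := hθ
  have hmin : θ ≤ ∑ i, min (p i) (q i) :=
    (le_min hp₀ hq₀).trans <|
      single_le_sum (fun i _ => le_min (hp i) (hq i)) (mem_univ i₀)
  simp only [abs_sub_eq_add_sub_two_mul_min, sum_sub_distrib, sum_add_distrib, ← mul_sum, hp1, hq1]
  linarith

lemma sum_posPart_eq_sum_negPart {a : κ → ℝ} (ha : ∑ j, a j = 0) :
    ∑ j, (a j)⁺ = ∑ j, (a j)⁻ := by
  rw [← sub_eq_zero, ← sum_sub_distrib]
  simpa only [posPart_sub_negPart] using ha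

lemma sum_abs_eq_two_mul_sum_posPart {a : κ → ℝ} (ha : ∑ j, a j = 0) :
    ∑ j, |a j| = 2 * ∑ j, (a j)⁺ := by
  simp only [← posPart_add_negPart, sum_add_distrib, ← sum_posPart_eq_sum_negPart ha]
  ring

lemma sum_posPart_mul_sum_mul_eq {a : κ → ℝ} (ha : ∑ j, a j = 0) (c : κ → ℝ) :
    (∑ j, (a j)⁺) * ∑ j, c j * a j =
      ∑ j₁, ∑ j₂, (a j₁)⁺ * (a j₂)⁻ * (c j₁ - c j₂) := by
  calc (∑ j, (a j)⁺) * ∑ j, c j * a j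
      = (∑ j, (a j)⁺ * c j) * ∑ j, (a j)⁻ - (∑ j, (a j)⁺) * ∑ j, (a j)⁻ * c j := by
        rw [← sum_posPart_eq_sum_negPart ha, mul_comm (∑ j, _ * c j), ← mul_sub,
          ← sum_sub_distrib]
        exact congrArg _ <| sum_congr rfl fun j _ => by
          rw [← sub_mul, posPart_sub_negPart, mul_comm]
    _ = ∑ j₁, ∑ j₂, (a j₁)⁺ * (a j₂)⁻ * (c j₁ - c j₂) := by
        simp only [sum_mul_sum, ← sum_sub_distrib]
        exact sum_congr rfl fun _ _ => sum_congr rfl fun _ _ => by ring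

lemma sum_posPart_mul_sum_abs_sum_mul_le {P : ι → κ → ℝ} (hnn : ∀ i j, 0 ≤ P i j)
    (hcol : ∀ j, ∑ i, P i j = 1) {θ : ℝ}
    (hpair : ∀ j₁ j₂, ∃ i, θ ≤ P i j₁ ∧ θ ≤ P i j₂) {a : κ → ℝ} (ha : ∑ j, a j = 0) :
    (∑ j, (a j)⁺) * ∑ i, |∑ j, P i j * a j| ≤ 2 * (1 - θ) * (∑ j, (a j)⁺) ^ 2 := by
  calc (∑ j, (a j)⁺) * ∑ i, |∑ j, P i j * a j|
      = ∑ i, |∑ j₁, ∑ j₂, (a j₁)⁺ * (a j₂)⁻ * (P i j₁ - P i j₂)| := by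
        rw [mul_sum]
        exact sum_congr rfl fun i _ => by
          rw [← sum_posPart_mul_sum_mul_eq ha, abs_mul,
            abs_of_nonneg (sum_nonneg fun j _ => posPart_nonneg (a j))]
    _ ≤ ∑ i, ∑ j₁, ∑ j₂, (a j₁)⁺ * (a j₂)⁻ * |P i j₁ - P i j₂| := by
        gcongr with i
        refine (abs_sum_le_sum_abs _ _).trans (sum_le_sum fun j₁ _ => ?_)
        refine (abs_sum_le_sum_abs _ _).trans_eq (sum_congr rfl fun j₂ _ => ?_)
        rw [abs_mul, abs_of_nonneg (by positivity)]
    _ = ∑ j₁, ∑ j₂, (a j₁)⁺ * (a j₂)⁻ * ∑ i, |P i j₁ - P i j₂| := by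
        simp only [mul_sum]
        rw [sum_comm]
        exact sum_congr rfl fun _ _ => sum_comm
    _ ≤ ∑ j₁, ∑ j₂, (a j₁)⁺ * (a j₂)⁻ * (2 * (1 - θ)) := by
        gcongr with j₁ _ j₂
        exact sum_abs_sub_le_two_mul_one_sub (hnn · j₁) (hnn · j₂) (hcol j₁) (hcol j₂)
          (hpair j₁ j₂)
    _ = 2 * (1 - θ) * (∑ j, (a j)⁺) ^ 2 := by
        simp only [← sum_mul, ← mul_sum]
        rw [← sum_posPart_eq_sum_negPart ha]
        ring

theorem sum_abs_sum_mul_le_one_sub_mul {P : ι → κ → ℝ} (hnn : ∀ i j, 0 ≤ P i j)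
    (hcol : ∀ j, ∑ i, P i j = 1) {θ : ℝ}
    (hpair : ∀ j₁ j₂, ∃ i, θ ≤ P i j₁ ∧ θ ≤ P i j₂) {a : κ → ℝ} (ha : ∑ j, a j = 0) :
    ∑ i, |∑ j, P i j * a j| ≤ (1 - θ) * ∑ j, |a j| := by
  have hS : 0 ≤ ∑ j, (a j)⁺ := sum_nonneg fun j _ => posPart_nonneg _
  rw [sum_abs_eq_two_mul_sum_posPart ha]
  rcases hS.eq_or_lt with hS0 | hSpos
  · have habs : ∑ j, |a j| = 0 := by rw [sum_abs_eq_two_mul_sum_posPart ha, ← hS0, mul_zero]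
    have h : ∀ j, a j = 0 := fun j => abs_eq_zero.mp <|
      (sum_eq_zero_iff_of_nonneg fun j _ => abs_nonneg (a j)).mp habs j (mem_univ j)
    simp [h]
  exact le_of_mul_le_mul_left
    ((sum_posPart_mul_sum_abs_sum_mul_le hnn hcol hpair ha).trans_eq (by ring)) hSpos

end

/-- if `P` is an `(m+1)×(d+1)` nonnegative matrix with columns
summing to `1`, and there is `θ > 0` such that for every pair of columns
`j₁, j₂` there is a row `i₀` with `P i₀ j₁ ≥ θ` and `P i₀ j₂ ≥ θ`, then for
every `a` with coordinate sum `0`, `‖Pa‖₁ ≤ (1 - θ/d)·‖a‖₁`. -/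
theorem stmt_18 (m d : ℕ) (hd : 1 ≤ d)
    (P : Matrix (Fin (m + 1)) (Fin (d + 1)) ℝ)
    (hnn : ∀ i j, 0 ≤ P i j)
    (hcol : ∀ j, ∑ i, P i j = 1)
    (θ : ℝ) (hθ : 0 < θ)
    (hpair : ∀ j₁ j₂ : Fin (d + 1), ∃ i₀ : Fin (m + 1), θ ≤ P i₀ j₁ ∧ θ ≤ P i₀ j₂)
    (a : Fin (d + 1) → ℝ) (ha : ∑ j, a j = 0) :
    ∑ i, |∑ j, P i j * a j| ≤ (1 - θ / d) * ∑ j, |a j| := by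
  calc ∑ i, |∑ j, P i j * a j| ≤ (1 - θ) * ∑ j, |a j| :=
        sum_abs_sum_mul_le_one_sub_mul hnn hcol hpair ha
    _ ≤ (1 - θ / d) * ∑ j, |a j| := by
        gcongr
        exact div_le_self hθ.le (Nat.one_le_cast.mpr hd)
end

section
/- Let A be a finite alphabet, X = A^ℕ, n,k positive integers, and γ : A^{[n+k]} → A^{[n]} a map on words. Let g be the associated shift-like map on X defined by g(s* x) = γ(s*) x for s* ∈ A^{[n+k]}, x ∈ X. Then the map R^g : X → (A^{[n+k]})^ℕ given by R^g(x)_j = J_{n+k}(g^j(x)) is a homeomorphism onto the subshift of finite type K*_{G*} (where G* = J⁻¹∘γ with J : A^{[n+k]} → A^{[n]} the initial-word map), conjugating g to the shift S. -/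
/-- The initial word of length `n` of a word of length `n + k`. -/
def initWord {A : Type*} (n k : ℕ) (w : Fin (n + k) → A) : Fin n → A :=
  fun i => w ⟨i.1, by omega⟩

/-- The shift-like map `g` on `X = A^ℕ` associated to a word map
`γ : A^{[n+k]} → A^{[n]}`: `g (s* x) = γ(s*) x`. -/
def shiftLike {A : Type*} (n k : ℕ) (γ : (Fin (n + k) → A) → Fin n → A)
    (x : ℕ → A) : ℕ → A :=
  fun i => if h : i < n then γ (fun j => x j.1) ⟨i, h⟩ else x (i + k)

section Aux

variable {A : Type*} (n k : ℕ)
  (γ : (Fin (n + k) → A) → Fin n → A)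

/-- The forward map `R^g`. -/
def fwd (x : ℕ → A) : ℕ → Fin (n + k) → A :=
  fun j i => (shiftLike n k γ)^[j] x i.1

/-- The inverse map. -/
def bwd (hk : 1 ≤ k) (s : ℕ → Fin (n + k) → A) : ℕ → A :=
  fun m => if h : m < n then s 0 ⟨m, by omega⟩
    else s ((m - n) / k) ⟨n + (m - n) % k, by have := Nat.mod_lt (m - n) hk; omega⟩

lemma tail_iterate (x : ℕ → A) (j : ℕ) :
    ∀ m, n ≤ m → (shiftLike n k γ)^[j] x m = x (m + j * k) := by
  induction j generalizing x with
  | zero => intro m hm; simp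
  | succ j ih =>
    intro m hm
    rw [Function.iterate_succ_apply, ih (shiftLike n k γ x) m hm]
    have h1 : ¬ (m + j * k < n) := by omega
    simp only [shiftLike, h1, dif_neg, not_false_iff]
    congr 1; ring

lemma fwd_mem (x : ℕ → A) :
    ∀ i, initWord n k (fwd n k γ x (i + 1)) = γ (fwd n k γ x i) := by
  intro i
  funext j
  show (shiftLike n k γ)^[i + 1] x j.1 = _
  rw [Function.iterate_succ_apply']
  have hj : j.1 < n := j.2
  simp only [shiftLike, hj, dif_pos]
  rfl

lemma bwd_fwd (hk : 1 ≤ k) (x : ℕ → A) : bwd n k hk (fwd n k γ x) = x := by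
  funext m
  unfold bwd fwd
  by_cases h : m < n
  · simp [h]
  · simp only [h, dif_neg, not_false_iff]
    rw [tail_iterate n k γ x _ _ (by omega)]
    congr 1
    have := Nat.mod_add_div' (m - n) k
    omega

lemma g_bwd (hk : 1 ≤ k) (s : ℕ → Fin (n + k) → A)
    (hs : ∀ i, initWord n k (s (i + 1)) = γ (s i)) :
    shiftLike n k γ (bwd n k hk s) = bwd n k hk (fun j => s (j + 1)) := by
  funext m
  by_cases h : m < n
  · have h1 : (fun j : Fin (n + k) => bwd n k hk s j.1) = s 0 := by
      funext j
      unfold bwd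
      by_cases hj : (j : ℕ) < n
      · simp [hj]
      · have h2 : ((j : ℕ) - n) / k = 0 := Nat.div_eq_of_lt (by omega)
        have h3 : ((j : ℕ) - n) % k = (j : ℕ) - n := Nat.mod_eq_of_lt (by omega)
        simp only [hj, dif_neg, not_false_iff, h2, h3]
        exact congrArg (s 0) (Fin.ext (by simp; omega))
    rw [show shiftLike n k γ (bwd n k hk s) m
        = γ (fun j : Fin (n + k) => bwd n k hk s j.1) ⟨m, h⟩ from dif_pos h,
      h1, ← hs 0]
    simp [bwd, h, initWord]
  · simp only [shiftLike, bwd, h, dif_neg, not_false_iff]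
    have h2 : ¬ (m + k < n) := by omega
    simp only [h2, dif_neg, not_false_iff]
    have h3 : (m + k - n) / k = (m - n) / k + 1 := by
      have : m + k - n = (m - n) + k := by omega
      rw [this, Nat.add_div_right _ hk]
    have h4 : (m + k - n) % k = (m - n) % k := by
      have : m + k - n = (m - n) + k := by omega
      rw [this, Nat.add_mod_right]
    simp only [h3, h4]

lemma fwd_bwd (hk : 1 ≤ k) (s : ℕ → Fin (n + k) → A)
    (hs : ∀ i, initWord n k (s (i + 1)) = γ (s i)) :
    fwd n k γ (bwd n k hk s) = s := by
  have key : ∀ j (s : ℕ → Fin (n + k) → A),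
      (∀ i, initWord n k (s (i + 1)) = γ (s i)) →
      (shiftLike n k γ)^[j] (bwd n k hk s) = bwd n k hk (fun l => s (l + j)) := by
    intro j
    induction j with
    | zero => intro s hs; simp
    | succ j ih =>
      intro s hs
      rw [Function.iterate_succ_apply, g_bwd n k γ hk s hs,
        ih (fun l => s (l + 1)) (fun i => hs (i + 1))]
      exact congrArg _ (funext fun l => congrArg s (by omega))
  funext j i
  show (shiftLike n k γ)^[j] (bwd n k hk s) i.1 = _
  rw [key j s hs]
  unfold bwd
  by_cases h : (i : ℕ) < n
  · simp [h]
  · have h2 : ((i : ℕ) - n) / k = 0 := Nat.div_eq_of_lt (by omega)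
    have h3 : ((i : ℕ) - n) % k = (i : ℕ) - n := Nat.mod_eq_of_lt (by omega)
    simp only [h, dif_neg, not_false_iff, h2, h3, zero_add]
    exact congrArg (s j) (Fin.ext (by simp; omega))

end Aux

/-- the map `R^g(x)_j = J_{n+k}(g^j x)` is a homeomorphism from
`X = A^ℕ` onto the subshift of finite type `K*_{G*}` (where
`G* w₁ w₂ ↔ J(w₂) = γ(w₁)`), conjugating the shift-like map `g` to the
shift `S`. -/
theorem stmt_19 {A : Type*} [Fintype A] [TopologicalSpace A] [DiscreteTopology A]
    (n k : ℕ) (hn : 1 ≤ n) (hk : 1 ≤ k)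
    (γ : (Fin (n + k) → A) → Fin n → A) :
    ∃ e : (ℕ → A) ≃ₜ
        {s : ℕ → Fin (n + k) → A // ∀ i, initWord n k (s (i + 1)) = γ (s i)},
      (∀ (x : ℕ → A) (j : ℕ),
          (e x).1 j = fun i : Fin (n + k) => (shiftLike n k γ)^[j] x i.1) ∧
      (∀ (x : ℕ → A) (j : ℕ),
          (e (shiftLike n k γ x)).1 j = (e x).1 (j + 1)) := by
  have hgcont : Continuous (shiftLike n k γ) := by
    apply continuous_pi
    intro m
    by_cases h : m < n
    · simp only [shiftLike, h, dif_pos]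
      exact (continuous_of_discreteTopology
        (f := fun w : Fin (n + k) → A => γ w ⟨m, h⟩)).comp
        (continuous_pi fun j => continuous_apply _)
    · simp only [shiftLike, h, dif_neg, not_false_iff]
      exact continuous_apply _
  refine ⟨⟨⟨fun x => ⟨fwd n k γ x, fwd_mem n k γ x⟩,
      fun s => bwd n k hk s.1,
      fun x => bwd_fwd n k γ hk x,
      fun s => Subtype.ext (fwd_bwd n k γ hk s.1 s.2)⟩, ?_, ?_⟩, ?_, ?_⟩
  · apply Continuous.subtype_mk
    apply continuous_pi
    intro j
    apply continuous_pi
    intro i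
    exact (continuous_apply _).comp (hgcont.iterate j)
  · apply continuous_pi
    intro m
    unfold bwd
    by_cases h : m < n
    · simp only [h, dif_pos]
      exact (continuous_apply _).comp ((continuous_apply _).comp continuous_subtype_val)
    · simp only [h, dif_neg, not_false_iff]
      exact (continuous_apply _).comp ((continuous_apply _).comp continuous_subtype_val)
  · intro x j; rfl
  · intro x j
    funext i
    show (shiftLike n k γ)^[j] (shiftLike n k γ x) i.1 = (shiftLike n k γ)^[j+1] x i.1
    rw [Function.iterate_succ_apply]
end
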